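/- arXiv:2409.02343 — 2 statements merged into one kernel-verified Lean document; each statement's English description precedes it below -/
import Mathlib

section
/- Let G, D ∈ ℝ^d with ‖D‖ = 1, G ≠ 0, and G not parallel to D, let θ ∈ (0, π/2] be the angle between G and D, and let 0 < γ < 2 satisfy cos θ < 1 − γ/2. Define Z = (G − (D·G)D)/‖G − (D·G)D‖ and Δ = (√(γ(4−γ))/2)·Z − (γ/2)·D. Then ‖Δ‖² = γ, ‖D + Δ‖ = 1, and G·(D + Δ) = ‖G‖·( (1−γ/2)cos θ + (√(γ(4−γ))/2) sin θ ). -/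
open scoped RealInnerProductSpace

theorem stmt_16 {d : ℕ} (G D : EuclideanSpace ℝ (Fin d)) (hD : ‖D‖ = 1) (hG : G ≠ 0)
    (hpar : G - ⟪D, G⟫ • D ≠ 0)
    (θ γ : ℝ) (hθ0 : 0 < θ) (hθ2 : θ ≤ Real.pi / 2)
    (hcos : Real.cos θ = ⟪G, D⟫ / ‖G‖)
    (hsin : Real.sin θ = ‖G - ⟪D, G⟫ • D‖ / ‖G‖)
    (hγ0 : 0 < γ) (hγ2 : γ < 2) (hcap : Real.cos θ < 1 - γ / 2) :
    ‖(Real.sqrt (γ * (4 - γ)) / 2) • (‖G - ⟪D, G⟫ • D‖⁻¹ • (G - ⟪D, G⟫ • D))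
        - (γ / 2) • D‖ ^ 2 = γ ∧
    ‖D + ((Real.sqrt (γ * (4 - γ)) / 2) • (‖G - ⟪D, G⟫ • D‖⁻¹ • (G - ⟪D, G⟫ • D))
        - (γ / 2) • D)‖ = 1 ∧
    ⟪G, D + ((Real.sqrt (γ * (4 - γ)) / 2) • (‖G - ⟪D, G⟫ • D‖⁻¹ • (G - ⟪D, G⟫ • D))
        - (γ / 2) • D)⟫ =
      ‖G‖ * ((1 - γ / 2) * Real.cos θ + (Real.sqrt (γ * (4 - γ)) / 2) * Real.sin θ) := by
  have hG0 : ‖G‖ ≠ 0 := norm_ne_zero_iff.2 hG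
  set W : EuclideanSpace ℝ (Fin d) := G - ⟪D, G⟫ • D with hW
  have hWn : ‖W‖ ≠ 0 := norm_ne_zero_iff.2 hpar
  have hWpos : 0 < ‖W‖ := (norm_nonneg W).lt_of_ne' hWn
  have hDD : ⟪D, D⟫ = 1 := by
    rw [real_inner_self_eq_norm_sq, hD]; norm_num
  have hDW : ⟪D, W⟫ = 0 := by
    rw [hW, inner_sub_right, real_inner_smul_right, hDD]; ring
  have hWD : ⟪W, D⟫ = 0 := by rw [real_inner_comm]; exact hDW
  have hWW : ⟪W, W⟫ = ‖W‖ ^ 2 := real_inner_self_eq_norm_sq W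
  have hGW : ⟪G, W⟫ = ‖W‖ ^ 2 := by
    have hGdec : G = W + ⟪D, G⟫ • D := by rw [hW]; abel
    calc ⟪G, W⟫ = ⟪W + ⟪D, G⟫ • D, W⟫ := by rw [← hGdec]
    _ = ⟪W, W⟫ + ⟪D, G⟫ * ⟪D, W⟫ := by rw [inner_add_left, real_inner_smul_left]
    _ = ‖W‖ ^ 2 := by rw [hWW, hDW]; ring
  set a : ℝ := Real.sqrt (γ * (4 - γ)) / 2 with ha
  have ha0 : 0 ≤ a := by positivity
  have hsq : a ^ 2 = γ * (4 - γ) / 4 := by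
    rw [ha, div_pow, Real.sq_sqrt (by nlinarith)]
    ring
  set Z : EuclideanSpace ℝ (Fin d) := ‖W‖⁻¹ • W with hZ
  have hZn : ‖Z‖ = 1 := by
    rw [hZ, norm_smul, norm_inv, norm_norm, inv_mul_cancel₀ hWn]
  have hDZ : ⟪D, Z⟫ = 0 := by rw [hZ, real_inner_smul_right, hDW]; ring
  have hGZ : ⟪G, Z⟫ = ‖W‖ := by
    rw [hZ, real_inner_smul_right, hGW]
    field_simp
  have haZD : ⟪a • Z, (γ / 2) • D⟫ = 0 := by
    simp only [real_inner_smul_left, real_inner_smul_right, hZ, hWD]; ring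
  have key1 : ‖a • Z - (γ / 2) • D‖ ^ 2 = γ := by
    rw [norm_sub_sq_real, haZD, norm_smul a Z, hZn, norm_smul (γ / 2) D, hD]
    rw [Real.norm_eq_abs, Real.norm_eq_abs, abs_of_nonneg ha0,
      abs_of_nonneg (by positivity : (0:ℝ) ≤ γ / 2)]
    nlinarith [hsq]
  refine ⟨key1, ?_, ?_⟩
  · have hDΔ : ⟪D, a • Z - (γ / 2) • D⟫ = -(γ / 2) := by
      simp only [inner_sub_right, real_inner_smul_right, hZ, hDW, hDD]; ring
    have h2 : ‖D + (a • Z - (γ / 2) • D)‖ ^ 2 = 1 := by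
      rw [norm_add_sq_real, hDΔ, hD, key1]; ring
    rw [← Real.sqrt_sq (norm_nonneg (D + (a • Z - (γ / 2) • D))), h2, Real.sqrt_one]
  · have hcos' : ⟪G, D⟫ = ‖G‖ * Real.cos θ := by
      rw [hcos]; field_simp
    have hsin' : ‖W‖ = ‖G‖ * Real.sin θ := by
      rw [hsin]; field_simp
    have hWinv : ‖W‖⁻¹ * ‖W‖ ^ 2 = ‖W‖ := by field_simp
    simp only [inner_add_right, inner_sub_right, real_inner_smul_right, hZ, hGW]
    rw [hWinv, hcos', hsin']
    ring
end

section
/- Let D ∈ ℝ^d be a unit vector and G ∈ ℝ^d nonzero with angle θ ∈ (0, π/2] to D, and let 0 < γ < 2 with cos θ < 1 − γ/2. Then for every unit vector x ∈ ℝ^d with ‖x − D‖² ≤ γ, one has G·x ≤ ‖G‖·((1−γ/2)cos θ + (√(γ(4−γ))/2) sin θ); i.e., the point x* = (√(γ(4−γ))/2)·Z + (1−γ/2)·D with Z = (G − (D·G)D)/‖G − (D·G)D‖ maximizes G·x over the spherical cap {x : ‖x‖ = 1, ‖x − D‖² ≤ γ}. -/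
open scoped RealInnerProductSpace
set_option maxHeartbeats 800000

lemma stmt_17_aux (a b N t t0 s s0 : ℝ) (hN : 0 < N) (ha0 : 0 ≤ a) (hat : a ≤ N * t0)
    (hb0 : 0 < b) (hab : a ^ 2 + b ^ 2 = N ^ 2) (ht0pos : 0 < t0) (htt : t0 ≤ t)
    (ht1 : t ≤ 1) (hs0 : 0 ≤ s) (hs00 : 0 ≤ s0) (hs : s ^ 2 = 1 - t ^ 2)
    (hss : s0 ^ 2 = 1 - t0 ^ 2) :
    a * t + b * s ≤ a * t0 + b * s0 := by
  have htpos : 0 < t := lt_of_lt_of_le ht0pos htt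
  have hkey : t0 * t + s0 * s ≤ 1 := by
    nlinarith [sq_nonneg (t0 * s - s0 * t), sq_nonneg (t0 * t + s0 * s),
      mul_nonneg (mul_nonneg ht0pos.le htpos.le) hs0,
      mul_nonneg hs00 hs0]
  have hsle : s ≤ s0 := by nlinarith
  have hbN : N * s0 ≤ b := by nlinarith [mul_nonneg hN.le hs00]
  have h1 : a * (t - t0) ≤ N * t0 * (t - t0) :=
    mul_le_mul_of_nonneg_right hat (sub_nonneg.2 htt)
  have h2 : N * s0 * (s0 - s) ≤ b * (s0 - s) :=
    mul_le_mul_of_nonneg_right hbN (sub_nonneg.2 hsle)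
  nlinarith [mul_le_mul_of_nonneg_left hkey hN.le]

theorem stmt_17 {d : ℕ} (G D : EuclideanSpace ℝ (Fin d)) (hD : ‖D‖ = 1) (hG : G ≠ 0)
    (hpar : ‖G - ⟪D, G⟫ • D‖ > 0)
    (θ γ : ℝ) (hθ0 : 0 < θ) (hθ2 : θ ≤ Real.pi / 2)
    (hcos : Real.cos θ = ⟪G, D⟫ / ‖G‖)
    (hsin : Real.sin θ = ‖G - ⟪D, G⟫ • D‖ / ‖G‖)
    (hγ0 : 0 < γ) (hγ2 : γ < 2) (hcap : Real.cos θ < 1 - γ / 2) :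
    ∀ x : EuclideanSpace ℝ (Fin d), ‖x‖ = 1 → ‖x - D‖ ^ 2 ≤ γ →
      ⟪G, x⟫ ≤ ‖G‖ * ((1 - γ / 2) * Real.cos θ +
        (Real.sqrt (γ * (4 - γ)) / 2) * Real.sin θ) := by
  intro x hx hxD
  set N := ‖G‖ with hN
  have hNpos : 0 < N := norm_pos_iff.2 hG
  set a : ℝ := ⟪D, G⟫ with ha
  set b : ℝ := ‖G - a • D‖ with hb
  have hGD : ⟪G, D⟫ = a := (real_inner_comm G D).symm
  set t : ℝ := ⟪D, x⟫ with ht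
  set t0 : ℝ := 1 - γ / 2 with ht0
  -- cos θ ≥ 0
  have hcosnn : 0 ≤ Real.cos θ := Real.cos_nonneg_of_mem_Icc
    ⟨by linarith [Real.pi_pos], hθ2⟩
  have hcosN : Real.cos θ * N = a := by
    rw [hcos, hGD, div_mul_cancel₀ _ hNpos.ne']
  have hsinN : Real.sin θ * N = b := by
    rw [hsin, div_mul_cancel₀ _ hNpos.ne']
  have ha0 : 0 ≤ a := hcosN ▸ mul_nonneg hcosnn hNpos.le
  have hat : a ≤ N * t0 := by
    rw [← hcosN]; nlinarith
  have ht0pos : 0 < t0 := lt_of_le_of_lt hcosnn hcap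
  -- t bounds
  have hnormsub : ‖x - D‖ ^ 2 = 2 - 2 * t := by
    rw [← real_inner_self_eq_norm_sq]
    simp only [inner_sub_sub_self]
    rw [real_inner_self_eq_norm_sq, real_inner_self_eq_norm_sq, hx, hD,
      (real_inner_comm x D).symm, ← ht]
    ring
  have htt : t0 ≤ t := by rw [hnormsub] at hxD; rw [ht0]; linarith
  have ht1 : t ≤ 1 := by
    have := real_inner_le_norm D x
    rw [hD, hx] at this; simpa using this
  have ht1' : t ^ 2 ≤ 1 := by nlinarith
  -- a^2 + b^2 = N^2
  have hab : a ^ 2 + b ^ 2 = N ^ 2 := by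
    have : b ^ 2 = ‖G‖ ^ 2 - 2 * ⟪G, a • D⟫ + ‖a • D‖ ^ 2 := by
      rw [hb]; exact norm_sub_sq_real G (a • D)
    rw [real_inner_smul_right, hGD, norm_smul, hD] at this
    simp at this
    nlinarith
  -- orthogonal part estimate
  have horth : ⟪G - a • D, D⟫ = 0 := by
    rw [inner_sub_left, real_inner_smul_left, real_inner_self_eq_norm_sq, hD, hGD]; ring
  set s : ℝ := Real.sqrt (1 - t ^ 2) with hs
  have hs2 : s ^ 2 = 1 - t ^ 2 := Real.sq_sqrt (by linarith)
  have hxt : ‖x - t • D‖ = s := by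
    rw [hs, ← Real.sqrt_sq (norm_nonneg (x - t • D))]
    congr 1
    rw [norm_sub_sq_real, real_inner_smul_right, norm_smul, hx, hD,
      (real_inner_comm x D).symm, ← ht, Real.norm_eq_abs,
      abs_of_pos (lt_of_lt_of_le ht0pos htt)]
    ring
  have hDD : ⟪D, D⟫ = (1:ℝ) := by
    rw [real_inner_self_eq_norm_sq, hD]; norm_num
  have hsplit : ⟪G, x⟫ = a * t + ⟪G - a • D, x - t • D⟫ := by
    rw [inner_sub_left, inner_sub_right, inner_sub_right, real_inner_smul_right,
      real_inner_smul_left, real_inner_smul_left, real_inner_smul_right,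
      ← ht, hDD, hGD]
    ring
  have hcs : ⟪G - a • D, x - t • D⟫ ≤ b * s := by
    calc ⟪G - a • D, x - t • D⟫ ≤ ‖G - a • D‖ * ‖x - t • D‖ := real_inner_le_norm _ _
    _ = b * s := by rw [← hb, hxt]
  -- s0
  set s0 : ℝ := Real.sqrt (1 - t0 ^ 2) with hs0def
  have hs02 : s0 ^ 2 = 1 - t0 ^ 2 := Real.sq_sqrt (by nlinarith)
  have hs0eq : Real.sqrt (γ * (4 - γ)) / 2 = s0 := by
    rw [hs0def, ht0]
    rw [show 1 - (1 - γ / 2) ^ 2 = γ * (4 - γ) / 4 by ring]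
    rw [show γ * (4 - γ) / 4 = γ * (4 - γ) / 4 from rfl]
    rw [Real.sqrt_div (by nlinarith : (0:ℝ) ≤ γ * (4 - γ)),
      show Real.sqrt 4 = 2 by
        rw [show (4:ℝ) = 2 ^ 2 by norm_num, Real.sqrt_sq (by norm_num : (0:ℝ) ≤ 2)]]
  have hbpos : 0 < b := hpar
  have hcore : a * t + b * s ≤ a * t0 + b * s0 :=
    stmt_17_aux a b N t t0 s s0 hNpos ha0 hat hbpos hab ht0pos htt ht1
      (Real.sqrt_nonneg _) (Real.sqrt_nonneg _) hs2 hs02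
  have hRHS : N * ((1 - γ / 2) * Real.cos θ + (Real.sqrt (γ * (4 - γ)) / 2) * Real.sin θ)
      = a * t0 + b * s0 := by
    rw [hs0eq, ← hcosN, ← hsinN]; ring
  rw [hRHS]
  calc ⟪G, x⟫ = a * t + ⟪G - a • D, x - t • D⟫ := hsplit
  _ ≤ a * t + b * s := by linarith
  _ ≤ a * t0 + b * s0 := hcore
end
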